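/- In the WeightedERM high-dimensional setting, fix ℓ ∈ [L] and b̄ > 0, and for i ∈ ℕ define h_i(b) := E[(1 + b·π_i^{(ℓ)}M′′(prox_{bπ_i^{(ℓ)}M(·, ȳ_i)}(Z_i·λ^{(ℓ)} + w_i^{(ℓ)}), ȳ_i))^{−1}], where ȳ_i := q(Z_i, Ψ_i, ε̄) with ε̄ ~ P_ε̄ independent of Z_i ~ N(0, Γ) and w_i^{(ℓ)} ~ N(0, κ_{ℓ,ℓ}). Then the family {h_i}_{i∈ℕ} is equicontinuous with respect to b on [0, b̄]; in fact there is a constant (depending on b̄ but not on i) such that |h_i(b₁) − h_i(b₂)| is bounded by that constant times |b₁ − b₂| for all b₁, b₂ ∈ [0, b̄] and all i. -/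

import Mathlib

open MeasureTheory ProbabilityTheory
open scoped BigOperators NNReal

noncomputable section

/-- Proximal operator: a minimizer of `t ↦ ρ * f t + (t - z)^2 / 2`
(for ρ = 0 the minimizer is z itself). -/
def prox (ρ : ℝ) (f : ℝ → ℝ) (z : ℝ) : ℝ :=
  Classical.epsilon fun t => ∀ s, ρ * f t + (t - z) ^ 2 / 2 ≤ ρ * f s + (s - z) ^ 2 / 2

/-- Matrix-vector multiplication for plain function-typed matrices. -/
def mvec {a b : ℕ} (A : Fin a → Fin b → ℝ) (v : Fin b → ℝ) : Fin a → ℝ :=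
  fun i => ∑ j, A i j * v j

/-- Standard Gaussian measure on ℝ^k. -/
def stdGaussian (k : ℕ) : Measure (Fin k → ℝ) :=
  Measure.pi fun _ => gaussianReal 0 1

/-- Centered Gaussian measure on ℝ^k with covariance matrix K (junk value `0`
if K is not positive semidefinite). -/
def gaussianCov {k : ℕ} (K : Fin k → Fin k → ℝ) : Measure (Fin k → ℝ) :=
  haveI := Classical.propDecidable ((Matrix.of K).PosSemidef)
  if h : (Matrix.of K).PosSemidef then
    (stdGaussian k).map fun g => mvec (fun i j => ((h.1.eigenvectorUnitary : Matrix (Fin k) (Fin k) ℝ) *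
      Matrix.diagonal (fun x => Real.sqrt (h.1.eigenvalues x)) *
      (star h.1.eigenvectorUnitary : Matrix (Fin k) (Fin k) ℝ)) i j) g
  else 0

/-! The integrand `(1 + ρ M''(p, y))⁻¹`, with `ρ = b π_i`, takes values in `(0, 1]`. The prox point
`p` solves `p + ρ ∂₁M(p, y) = x`, and monotonicity of `∂₁M(·, y)` makes this equation stable:
`|p(ρ₁) - p(ρ₂)| ≤ |ρ₁ - ρ₂| |∂₁M(x, y)|`. Hence the integrand is Lipschitz in `ρ` with constant
`B₂ + ρ B₃ |∂₁M(x, y)|`. As `∂₁M` grows at most linearly and `ε̄`, `Z_i`, `w_i` have first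
moments, integrating gives a Lipschitz constant in `b` that does not depend on `i`. -/

lemma abs_inv_sub_inv_le_abs_sub {a b : ℝ} (ha : 1 ≤ a) (hb : 1 ≤ b) :
    |a⁻¹ - b⁻¹| ≤ |a - b| := by
  rw [inv_sub_inv (by positivity) (by positivity), abs_div, abs_sub_comm,
    abs_of_pos (by positivity : 0 < a * b)]
  exact div_le_self (abs_nonneg _) (one_le_mul_of_one_le_of_one_le ha hb)

lemma abs_le_abs_add_of_mul_nonneg {a b : ℝ} (h : 0 ≤ a * b) : |a| ≤ |a + b| :=
  sq_le_sq.1 (by nlinarith [sq_nonneg b])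

lemma Monotone.sub_mul_sub_nonneg {f : ℝ → ℝ} (hf : Monotone f) (a b : ℝ) :
    0 ≤ (a - b) * (f a - f b) := by
  rcases le_total a b with h | h
  · exact mul_nonneg_of_nonpos_of_nonpos (sub_nonpos.2 h) (sub_nonpos.2 (hf h))
  · exact mul_nonneg (sub_nonneg.2 h) (sub_nonneg.2 (hf h))

lemma abs_sub_le_mul_abs_sub_of_hasDerivAt {f f' : ℝ → ℝ} (hf : ∀ x, HasDerivAt f (f' x) x)
    {C : ℝ} (hC : ∀ x, |f' x| ≤ C) (a b : ℝ) : |f a - f b| ≤ C * |a - b| := by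
  simpa [Real.norm_eq_abs] using Convex.norm_image_sub_le_of_norm_hasDerivWithin_le
    (fun x _ => (hf x).hasDerivWithinAt) (fun x _ => by simpa using hC x)
    convex_univ (Set.mem_univ b) (Set.mem_univ a)

lemma monotone_continuous_of_hasDerivAt_pos {f f' : ℝ → ℝ} (hf : ∀ x, HasDerivAt f (f' x) x)
    (hf' : ∀ x, 0 < f' x) : Monotone f ∧ Continuous f :=
  ⟨(strictMono_of_hasDerivAt_pos hf hf').monotone,
    continuous_iff_continuousAt.2 fun x => (hf x).continuousAt⟩

lemma abs_sub_le_of_abs_partialDeriv_le {f fx fy : ℝ → ℝ → ℝ}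
    (hfx : ∀ u v, HasDerivAt (fun t => f t v) (fx u v) u)
    (hfy : ∀ u v, HasDerivAt (f u) (fy u v) v) {a b : ℝ}
    (ha : ∀ u v, |fx u v| ≤ a) (hb : ∀ u v, |fy u v| ≤ b) (u v u' v' : ℝ) :
    |f u v - f u' v'| ≤ a * |u - u'| + b * |v - v'| :=
  calc |f u v - f u' v'| ≤ |f u v - f u' v| + |f u' v - f u' v'| := abs_sub_le _ _ _
    _ ≤ a * |u - u'| + b * |v - v'| :=
      add_le_add (abs_sub_le_mul_abs_sub_of_hasDerivAt (hfx · v) (ha · v) u u')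
        (abs_sub_le_mul_abs_sub_of_hasDerivAt (hfy u') (hb u') v v')

lemma continuous_uncurry_of_abs_sub_le {f : ℝ → ℝ → ℝ} {a b : ℝ}
    (hf : ∀ u v u' v', |f u v - f u' v'| ≤ a * |u - u'| + b * |v - v'|) :
    Continuous fun p : ℝ × ℝ => f p.1 p.2 := by
  refine (LipschitzWith.of_dist_le_mul (K := (|a| + |b|).toNNReal) fun p p' => ?_).continuous
  rw [Real.coe_toNNReal _ (by positivity), Real.dist_eq, Prod.dist_eq, Real.dist_eq, Real.dist_eq]
  calc |f p.1 p.2 - f p'.1 p'.2| ≤ a * |p.1 - p'.1| + b * |p.2 - p'.2| := hf _ _ _ _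
    _ ≤ |a| * max |p.1 - p'.1| |p.2 - p'.2| + |b| * max |p.1 - p'.1| |p.2 - p'.2| := by
      gcongr <;> first | exact le_abs_self _ | exact le_max_left _ _ | exact le_max_right _ _
    _ = _ := by ring

section Prox

variable {m m1 : ℝ → ℝ} {ρ : ℝ}

lemma hasDerivAt_prox_objective (hm : ∀ t, HasDerivAt m (m1 t) t) (ρ x t : ℝ) :
    HasDerivAt (fun s => ρ * m s + (s - x) ^ 2 / 2) (ρ * m1 t + (t - x)) t := by
  have hq : HasDerivAt (fun s => (s - x) ^ 2 / 2) (t - x) t :=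
    ((((hasDerivAt_id' t).sub_const x).fun_pow 2).div_const 2).congr_deriv (by push_cast; ring)
  exact ((hm t).const_mul ρ).add hq

lemma exists_forall_prox_objective_le (hm : ∀ t, HasDerivAt m (m1 t) t) (hm1 : Monotone m1)
    (hm1c : Continuous m1) (hρ : 0 ≤ ρ) (x : ℝ) :
    ∃ t, ∀ s, ρ * m t + (t - x) ^ 2 / 2 ≤ ρ * m s + (s - x) ^ 2 / 2 := by
  set φ' : ℝ → ℝ := fun t => ρ * m1 t + (t - x)
  have hφ' : Monotone φ' := (hm1.const_mul hρ).add fun a b h => sub_le_sub_right h x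
  set r := ρ * |m1 x|
  have hr : 0 ≤ r := by positivity
  obtain ⟨t, -, ht⟩ : ∃ t ∈ Set.Icc (x - r) (x + r), φ' t = 0 := by
    refine intermediate_value_Icc (by linarith) (by fun_prop) ⟨?_, ?_⟩
    · have := mul_le_mul_of_nonneg_left (hm1 (by linarith : x - r ≤ x)) hρ
      have := mul_le_mul_of_nonneg_left (le_abs_self (m1 x)) hρ
      simp only [φ']; linarith
    · have := mul_le_mul_of_nonneg_left (hm1 (by linarith : x ≤ x + r)) hρ
      have := mul_le_mul_of_nonneg_left (neg_abs_le (m1 x)) hρ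
      simp only [φ']; linarith
  have hcont : Continuous fun s => ρ * m s + (s - x) ^ 2 / 2 :=
    continuous_iff_continuousAt.2 fun s => (hasDerivAt_prox_objective hm ρ x s).continuousAt
  refine ⟨t, fun s => ?_⟩
  rcases le_total t s with hts | hst
  · refine monotoneOn_of_hasDerivWithinAt_nonneg (convex_Ici t) hcont.continuousOn
      (fun u _ => (hasDerivAt_prox_objective hm ρ x u).hasDerivWithinAt) (fun u hu => ?_)
      Set.self_mem_Ici hts hts
    rw [interior_Ici] at hu
    exact ht ▸ hφ' (le_of_lt hu)
  · refine antitoneOn_of_hasDerivWithinAt_nonpos (convex_Iic t) hcont.continuousOn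
      (fun u _ => (hasDerivAt_prox_objective hm ρ x u).hasDerivWithinAt) (fun u hu => ?_)
      hst Set.self_mem_Iic hst
    rw [interior_Iic] at hu
    exact ht ▸ hφ' (le_of_lt hu)

lemma prox_add_mul_deriv_eq (hm : ∀ t, HasDerivAt m (m1 t) t) (hm1 : Monotone m1)
    (hm1c : Continuous m1) (hρ : 0 ≤ ρ) (x : ℝ) :
    prox ρ m x + ρ * m1 (prox ρ m x) = x := by
  have hmin : IsLocalMin (fun s => ρ * m s + (s - x) ^ 2 / 2) (prox ρ m x) :=
    Filter.Eventually.of_forall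
      (Classical.epsilon_spec (exists_forall_prox_objective_le hm hm1 hm1c hρ x))
  linarith [hmin.hasDerivAt_eq_zero (hasDerivAt_prox_objective hm ρ x _)]

lemma abs_deriv_prox_le (hm : ∀ t, HasDerivAt m (m1 t) t) (hm1 : Monotone m1)
    (hm1c : Continuous m1) (hρ : 0 ≤ ρ) (x : ℝ) :
    |m1 (prox ρ m x)| ≤ |m1 x| := by
  have hP := prox_add_mul_deriv_eq hm hm1 hm1c hρ x
  set P := prox ρ m x
  rcases le_total 0 (m1 P) with h | h
  · rw [abs_of_nonneg h]
    exact (hm1 (by nlinarith [mul_nonneg hρ h])).trans (le_abs_self _)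
  · rw [abs_of_nonpos h]
    exact (neg_le_neg (hm1 (by nlinarith [mul_nonpos_of_nonneg_of_nonpos hρ h]))).trans
      (neg_le_abs _)

lemma abs_sub_le_of_add_mul_eq {f g : ℝ → ℝ} (hf : Monotone f) {ρ₁ ρ₂ p₁ p₂ x₁ x₂ : ℝ}
    (hρ₁ : 0 ≤ ρ₁) (h₁ : p₁ + ρ₁ * f p₁ = x₁) (h₂ : p₂ + ρ₂ * g p₂ = x₂) :
    |p₁ - p₂| ≤ |x₁ - x₂| + ρ₁ * |f p₂ - g p₂| + |ρ₁ - ρ₂| * |g p₂| := by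
  have hsign : 0 ≤ (p₁ - p₂) * (ρ₁ * (f p₁ - f p₂)) := by
    rw [mul_left_comm]; exact mul_nonneg hρ₁ (hf.sub_mul_sub_nonneg p₁ p₂)
  calc |p₁ - p₂| ≤ |(p₁ - p₂) + ρ₁ * (f p₁ - f p₂)| := abs_le_abs_add_of_mul_nonneg hsign
    _ = |(x₁ - x₂) - ρ₁ * (f p₂ - g p₂) - (ρ₁ - ρ₂) * g p₂| := by rw [← h₁, ← h₂]; ring_nf
    _ ≤ |x₁ - x₂| + |ρ₁ * (f p₂ - g p₂)| + |(ρ₁ - ρ₂) * g p₂| :=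
      (abs_sub _ _).trans (add_le_add (abs_sub _ _) le_rfl)
    _ = |x₁ - x₂| + ρ₁ * |f p₂ - g p₂| + |ρ₁ - ρ₂| * |g p₂| := by
      rw [abs_mul, abs_mul, abs_of_nonneg hρ₁]

lemma abs_prox_sub_prox_le_abs_sub_mul (hm : ∀ t, HasDerivAt m (m1 t) t) (hm1 : Monotone m1)
    (hm1c : Continuous m1) {ρ₁ ρ₂ : ℝ} (hρ₁ : 0 ≤ ρ₁) (hρ₂ : 0 ≤ ρ₂) (x : ℝ) :
    |prox ρ₁ m x - prox ρ₂ m x| ≤ |ρ₁ - ρ₂| * |m1 x| := by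
  have h := abs_sub_le_of_add_mul_eq hm1 hρ₁ (prox_add_mul_deriv_eq hm hm1 hm1c hρ₁ x)
    (prox_add_mul_deriv_eq hm hm1 hm1c hρ₂ x)
  simp only [sub_self, abs_zero, mul_zero, zero_add] at h
  exact h.trans (mul_le_mul_of_nonneg_left (abs_deriv_prox_le hm hm1 hm1c hρ₂ x) (abs_nonneg _))

lemma abs_prox_sub_prox_le {m' m1' : ℝ → ℝ} (hm : ∀ t, HasDerivAt m (m1 t) t)
    (hm1 : Monotone m1) (hm1c : Continuous m1) (hm' : ∀ t, HasDerivAt m' (m1' t) t)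
    (hm1' : Monotone m1') (hm1c' : Continuous m1') {c : ℝ} (hc : ∀ t, |m1 t - m1' t| ≤ c)
    (hρ : 0 ≤ ρ) (x x' : ℝ) :
    |prox ρ m x - prox ρ m' x'| ≤ |x - x'| + ρ * c := by
  have h := abs_sub_le_of_add_mul_eq hm1 hρ (prox_add_mul_deriv_eq hm hm1 hm1c hρ x)
    (prox_add_mul_deriv_eq hm' hm1' hm1c' hρ x')
  simp only [sub_self, abs_zero, zero_mul, add_zero] at h
  exact h.trans (by gcongr; exact hc _)

end Prox

section ProxDeriv

variable {M M1 M2 M3 M12 M2v : ℝ → ℝ → ℝ}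

/-- The derivative in `x` of `prox ρ (M · y) x`, by implicit differentiation of
`p + ρ ∂₁M(p, y) = x`. -/
def proxDeriv (M M2 : ℝ → ℝ → ℝ) (ρ x y : ℝ) : ℝ :=
  (1 + ρ * M2 (prox ρ (fun t => M t y) x) y)⁻¹

lemma one_le_one_add_mul_of_pos (hM2pos : ∀ u v, 0 < M2 u v) {ρ : ℝ} (hρ : 0 ≤ ρ) (u v : ℝ) :
    1 ≤ 1 + ρ * M2 u v :=
  le_add_of_nonneg_right (mul_nonneg hρ (hM2pos u v).le)

lemma abs_proxDeriv_le_one (hM2pos : ∀ u v, 0 < M2 u v) {ρ : ℝ} (hρ : 0 ≤ ρ) (x y : ℝ) :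
    |proxDeriv M M2 ρ x y| ≤ 1 := by
  have h := one_le_one_add_mul_of_pos hM2pos hρ (prox ρ (fun t => M t y) x) y
  rw [proxDeriv, abs_of_pos (inv_pos.2 (by linarith))]
  exact inv_le_one_of_one_le₀ h

lemma abs_proxDeriv_sub_proxDeriv_le
    (hM1 : ∀ u v, HasDerivAt (fun t => M t v) (M1 u v) u)
    (hM2 : ∀ u v, HasDerivAt (fun t => M1 t v) (M2 u v) u)
    (hM3 : ∀ u v, HasDerivAt (fun t => M2 t v) (M3 u v) u)
    (hM2pos : ∀ u v, 0 < M2 u v) {B2 B3 : ℝ} (hM2bdd : ∀ u v, M2 u v ≤ B2)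
    (hM3bdd : ∀ u v, |M3 u v| ≤ B3) {ρ₁ ρ₂ : ℝ} (hρ₁ : 0 ≤ ρ₁) (hρ₂ : 0 ≤ ρ₂) (x y : ℝ) :
    |proxDeriv M M2 ρ₁ x y - proxDeriv M M2 ρ₂ x y| ≤
      (B2 + ρ₂ * B3 * |M1 x y|) * |ρ₁ - ρ₂| := by
  obtain ⟨hmono, hcont⟩ := monotone_continuous_of_hasDerivAt_pos (hM2 · y) (hM2pos · y)
  set P₁ := prox ρ₁ (fun t => M t y) x
  set P₂ := prox ρ₂ (fun t => M t y) x
  have hP : |P₁ - P₂| ≤ |ρ₁ - ρ₂| * |M1 x y| :=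
    abs_prox_sub_prox_le_abs_sub_mul (hM1 · y) hmono hcont hρ₁ hρ₂ x
  have hM2P : |M2 P₁ y - M2 P₂ y| ≤ B3 * |P₁ - P₂| :=
    abs_sub_le_mul_abs_sub_of_hasDerivAt (hM3 · y) (hM3bdd · y) _ _
  have hB3 : 0 ≤ B3 := (abs_nonneg _).trans (hM3bdd 0 0)
  calc |proxDeriv M M2 ρ₁ x y - proxDeriv M M2 ρ₂ x y|
      ≤ |(1 + ρ₁ * M2 P₁ y) - (1 + ρ₂ * M2 P₂ y)| :=
        abs_inv_sub_inv_le_abs_sub (one_le_one_add_mul_of_pos hM2pos hρ₁ _ _)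
          (one_le_one_add_mul_of_pos hM2pos hρ₂ _ _)
    _ = |(ρ₁ - ρ₂) * M2 P₁ y + ρ₂ * (M2 P₁ y - M2 P₂ y)| := by ring_nf
    _ ≤ |ρ₁ - ρ₂| * B2 + ρ₂ * (B3 * (|ρ₁ - ρ₂| * |M1 x y|)) := by
      refine (abs_add_le _ _).trans (add_le_add ?_ ?_)
      · rw [abs_mul, abs_of_pos (hM2pos _ _)]
        exact mul_le_mul_of_nonneg_left (hM2bdd _ _) (abs_nonneg _)
      · rw [abs_mul, abs_of_nonneg hρ₂]
        exact mul_le_mul_of_nonneg_left (hM2P.trans (mul_le_mul_of_nonneg_left hP hB3)) hρ₂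
    _ = (B2 + ρ₂ * B3 * |M1 x y|) * |ρ₁ - ρ₂| := by ring

lemma continuous_proxDeriv
    (hM1 : ∀ u v, HasDerivAt (fun t => M t v) (M1 u v) u)
    (hM2 : ∀ u v, HasDerivAt (fun t => M1 t v) (M2 u v) u)
    (hM3 : ∀ u v, HasDerivAt (fun t => M2 t v) (M3 u v) u)
    (hM12 : ∀ u v, HasDerivAt (fun w => M1 u w) (M12 u v) v)
    (hM2v : ∀ u v, HasDerivAt (fun w => M2 u w) (M2v u v) v)
    (hM2pos : ∀ u v, 0 < M2 u v) {B3 B12 B2v : ℝ} (hM3bdd : ∀ u v, |M3 u v| ≤ B3)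
    (hM12bdd : ∀ u v, |M12 u v| ≤ B12) (hM2vbdd : ∀ u v, |M2v u v| ≤ B2v)
    {ρ : ℝ} (hρ : 0 ≤ ρ) :
    Continuous fun p : ℝ × ℝ => proxDeriv M M2 ρ p.1 p.2 := by
  have hprox : Continuous fun p : ℝ × ℝ => prox ρ (fun t => M t p.2) p.1 := by
    refine continuous_uncurry_of_abs_sub_le (f := fun x y => prox ρ (fun t => M t y) x)
      (a := 1) (b := ρ * B12) fun x y x' y' => ?_
    obtain ⟨hmono, hcont⟩ := monotone_continuous_of_hasDerivAt_pos (hM2 · y) (hM2pos · y)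
    obtain ⟨hmono', hcont'⟩ := monotone_continuous_of_hasDerivAt_pos (hM2 · y') (hM2pos · y')
    have := abs_prox_sub_prox_le (hM1 · y) hmono hcont (hM1 · y') hmono' hcont'
      (fun t => abs_sub_le_mul_abs_sub_of_hasDerivAt (hM12 t) (hM12bdd t) y y') hρ x x'
    linarith
  have hM2c : Continuous fun p : ℝ × ℝ => M2 p.1 p.2 :=
    continuous_uncurry_of_abs_sub_le (abs_sub_le_of_abs_partialDeriv_le hM3 hM2v hM3bdd hM2vbdd)
  refine (continuous_const.add (continuous_const.mul
    (hM2c.comp (hprox.prodMk continuous_snd)))).inv₀ fun p => ?_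
  exact (zero_lt_one.trans_le (one_le_one_add_mul_of_pos hM2pos hρ _ _)).ne'

end ProxDeriv

section Integrability

lemma continuous_mvec {a b : ℕ} (A : Fin a → Fin b → ℝ) : Continuous (mvec A) :=
  continuous_pi fun _ => continuous_finsetSum _ fun j _ => continuous_const.mul (continuous_apply j)

instance isFiniteMeasure_gaussianCov {k : ℕ} (K : Fin k → Fin k → ℝ) :
    IsFiniteMeasure (gaussianCov K) := by
  unfold gaussianCov _root_.stdGaussian
  split_ifs <;> infer_instance

lemma integrable_id_gaussianCov {k : ℕ} (K : Fin k → Fin k → ℝ) :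
    Integrable id (gaussianCov K) := by
  unfold gaussianCov _root_.stdGaussian
  split_ifs
  · rw [integrable_map_measure aestronglyMeasurable_id (continuous_mvec _).aemeasurable,
      Function.id_comp]
    exact integrable_pi_iff.2 fun i => integrable_finsetSum _ fun j _ =>
      (integrable_eval IsGaussian.integrable_id).const_mul _
  · exact integrable_zero_measure

lemma integrable_id_of_integrable_sq {μ : Measure ℝ} [IsFiniteMeasure μ]
    (h : Integrable (fun x => x ^ 2) μ) : Integrable id μ :=
  ((memLp_two_iff_integrable_sq aestronglyMeasurable_id).2 h).integrable one_le_two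

lemma integrable_id_prod {α β : Type*} [NormedAddCommGroup α] [NormedAddCommGroup β]
    [MeasurableSpace α] [MeasurableSpace β] {μ : Measure α} {ν : Measure β}
    [IsFiniteMeasure μ] [IsFiniteMeasure ν] (hμ : Integrable id μ) (hν : Integrable id ν) :
    Integrable id (μ.prod ν) :=
  (hμ.comp_fst ν).prodMk (hν.comp_snd μ)

lemma integral_integral_integral_eq_integral_prod {α β γ : Type*} [MeasurableSpace α]
    [MeasurableSpace β] [MeasurableSpace γ] {μ : Measure α} {ν : Measure β} {τ : Measure γ}
    [SFinite μ] [SFinite ν] [SFinite τ] {f : α → β → γ → ℝ}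
    (hf : Integrable (fun p => f p.1 p.2.1 p.2.2) (μ.prod (ν.prod τ))) :
    ∫ a, ∫ b, ∫ c, f a b c ∂τ ∂ν ∂μ = ∫ p, f p.1 p.2.1 p.2.2 ∂(μ.prod (ν.prod τ)) := by
  rw [integral_prod _ hf]
  refine integral_congr_ae (hf.prod_right_ae.mono fun a ha => ?_)
  exact (integral_prod _ ha).symm

end Integrability

section Lipschitz

variable {M M1 M2 M3 M12 M2v : ℝ → ℝ → ℝ} {B2 B3 B12 B2v : ℝ} {L : ℕ}

lemma abs_deriv_loss_le_add_mul_norm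
    (hM2 : ∀ u v, HasDerivAt (fun t => M1 t v) (M2 u v) u)
    (hM12 : ∀ u v, HasDerivAt (fun w => M1 u w) (M12 u v) v)
    (hM2pos : ∀ u v, 0 < M2 u v) (hM2bdd : ∀ u v, M2 u v ≤ B2)
    (hM12bdd : ∀ u v, |M12 u v| ≤ B12) {q : ℝ → ℝ → ℝ} {Cq : ℝ≥0}
    (hq : LipschitzWith Cq fun x : ℝ × ℝ => q x.1 x.2) (lam : Fin L → ℝ) (j : Fin L)
    (p : ℝ × (Fin L → ℝ) × ℝ) :
    |M1 (∑ k, p.2.1 k * lam k + p.2.2) (q (p.2.1 j) p.1)| ≤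
      |M1 0 (q 0 0)| + (B2 * (∑ k, |lam k| + 1) + B12 * Cq) * ‖p‖ := by
  obtain ⟨e, z, w⟩ := p
  have he : |e| ≤ ‖(e, z, w)‖ := norm_fst_le (e, z, w)
  have hz : ‖z‖ ≤ ‖(e, z, w)‖ := (norm_fst_le (z, w)).trans (norm_snd_le (e, z, w))
  have hw : |w| ≤ ‖(e, z, w)‖ := (norm_snd_le (z, w)).trans (norm_snd_le (e, z, w))
  have hx : |∑ k, z k * lam k + w| ≤ (∑ k, |lam k| + 1) * ‖(e, z, w)‖ :=
    calc |∑ k, z k * lam k + w| ≤ ∑ k, |z k * lam k| + |w| :=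
          (abs_add_le _ _).trans (add_le_add (Finset.abs_sum_le_sum_abs _ _) le_rfl)
      _ ≤ ∑ k, ‖(e, z, w)‖ * |lam k| + ‖(e, z, w)‖ := by
          gcongr with k
          rw [abs_mul]
          exact mul_le_mul_of_nonneg_right ((norm_le_pi_norm z k).trans hz) (abs_nonneg _)
      _ = (∑ k, |lam k| + 1) * ‖(e, z, w)‖ := by rw [← Finset.mul_sum]; ring
  have hy : |q (z j) e - q 0 0| ≤ Cq * ‖(e, z, w)‖ := by
    have h := hq.dist_le_mul (z j, e) (0, 0)
    rw [Real.dist_eq, Prod.dist_eq, Real.dist_eq, Real.dist_eq, sub_zero, sub_zero] at h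
    exact h.trans (mul_le_mul_of_nonneg_left (max_le ((norm_le_pi_norm z j).trans hz) he)
      Cq.coe_nonneg)
  have hM1 := abs_sub_le_of_abs_partialDeriv_le hM2 hM12
    (fun u v => (abs_of_pos (hM2pos u v)).trans_le (hM2bdd u v)) hM12bdd
    (∑ k, z k * lam k + w) (q (z j) e) 0 (q 0 0)
  have hB2 : 0 ≤ B2 := (hM2pos 0 0).le.trans (hM2bdd 0 0)
  have hB12 : 0 ≤ B12 := (abs_nonneg _).trans (hM12bdd 0 0)
  rw [sub_zero] at hM1
  have := mul_le_mul_of_nonneg_left hx hB2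
  have := mul_le_mul_of_nonneg_left hy hB12
  linarith [abs_sub_abs_le_abs_sub (M1 (∑ k, z k * lam k + w) (q (z j) e)) (M1 0 (q 0 0))]

lemma exists_abs_integral_proxDeriv_sub_le {μe μw : Measure ℝ} {μz : Measure (Fin L → ℝ)}
    [IsFiniteMeasure μe] [IsFiniteMeasure μz] [IsFiniteMeasure μw]
    (hμe : Integrable id μe) (hμz : Integrable id μz) (hμw : Integrable id μw)
    (hM1 : ∀ u v, HasDerivAt (fun t => M t v) (M1 u v) u)
    (hM2 : ∀ u v, HasDerivAt (fun t => M1 t v) (M2 u v) u)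
    (hM3 : ∀ u v, HasDerivAt (fun t => M2 t v) (M3 u v) u)
    (hM12 : ∀ u v, HasDerivAt (fun w => M1 u w) (M12 u v) v)
    (hM2v : ∀ u v, HasDerivAt (fun w => M2 u w) (M2v u v) v)
    (hM2pos : ∀ u v, 0 < M2 u v) (hM2bdd : ∀ u v, M2 u v ≤ B2)
    (hM3bdd : ∀ u v, |M3 u v| ≤ B3) (hM12bdd : ∀ u v, |M12 u v| ≤ B12)
    (hM2vbdd : ∀ u v, |M2v u v| ≤ B2v) {q : ℝ → ℝ → ℝ} {Cq : ℝ≥0}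
    (hq : LipschitzWith Cq fun x : ℝ × ℝ => q x.1 x.2) (lam : Fin L → ℝ) {R : ℝ} (hR : 0 ≤ R) :
    ∃ C, 0 ≤ C ∧ ∀ (j : Fin L) (ρ₁ ρ₂ : ℝ), 0 ≤ ρ₁ → 0 ≤ ρ₂ → ρ₂ ≤ R →
      |(∫ e, ∫ z, ∫ w, proxDeriv M M2 ρ₁ ((∑ k, z k * lam k) + w) (q (z j) e) ∂μw ∂μz ∂μe) -
        ∫ e, ∫ z, ∫ w, proxDeriv M M2 ρ₂ ((∑ k, z k * lam k) + w) (q (z j) e) ∂μw ∂μz ∂μe| ≤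
        C * |ρ₁ - ρ₂| := by
  set μ := μe.prod (μz.prod μw)
  set K := B2 * (∑ k, |lam k| + 1) + B12 * Cq
  set bound : ℝ × (Fin L → ℝ) × ℝ → ℝ := fun p => B2 + R * B3 * (|M1 0 (q 0 0)| + K * ‖p‖)
  have hB2 : 0 ≤ B2 := (hM2pos 0 0).le.trans (hM2bdd 0 0)
  have hB3 : 0 ≤ B3 := (abs_nonneg _).trans (hM3bdd 0 0)
  have hB12 : 0 ≤ B12 := (abs_nonneg _).trans (hM12bdd 0 0)
  have hbound : Integrable bound μ := (integrable_const _).add (((integrable_const _).add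
    ((integrable_id_prod hμe (integrable_id_prod hμz hμw)).norm.const_mul K)).const_mul _)
  refine ⟨∫ p, bound p ∂μ, integral_nonneg fun p => by positivity,
    fun j ρ₁ ρ₂ hρ₁ hρ₂ hρ₂R => ?_⟩
  set F : ℝ → ℝ × (Fin L → ℝ) × ℝ → ℝ :=
    fun ρ p => proxDeriv M M2 ρ (∑ k, p.2.1 k * lam k + p.2.2) (q (p.2.1 j) p.1)
  have hF : ∀ ρ, 0 ≤ ρ → Integrable (F ρ) μ := fun ρ hρ => by
    have hcont : Continuous (F ρ) :=
      (continuous_proxDeriv hM1 hM2 hM3 hM12 hM2v hM2pos hM3bdd hM12bdd hM2vbdd hρ).comp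
        ((by fun_prop : Continuous fun p : ℝ × (Fin L → ℝ) × ℝ =>
            ∑ k, p.2.1 k * lam k + p.2.2).prodMk
          (hq.continuous.comp (by fun_prop :
            Continuous fun p : ℝ × (Fin L → ℝ) × ℝ => (p.2.1 j, p.1))))
    exact .of_bound hcont.aestronglyMeasurable 1
      (ae_of_all _ fun p => abs_proxDeriv_le_one hM2pos hρ _ _)
  have hprod : ∀ ρ, 0 ≤ ρ → ∫ e, ∫ z, ∫ w, proxDeriv M M2 ρ ((∑ k, z k * lam k) + w)
      (q (z j) e) ∂μw ∂μz ∂μe = ∫ p, F ρ p ∂μ :=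
    fun ρ hρ => integral_integral_integral_eq_integral_prod (hF ρ hρ)
  rw [hprod ρ₁ hρ₁, hprod ρ₂ hρ₂, ← integral_sub (hF ρ₁ hρ₁) (hF ρ₂ hρ₂), ← integral_mul_const,
    ← Real.norm_eq_abs]
  refine norm_integral_le_of_norm_le (hbound.mul_const _) (ae_of_all _ fun p => ?_)
  calc ‖F ρ₁ p - F ρ₂ p‖
      ≤ (B2 + ρ₂ * B3 * |M1 (∑ k, p.2.1 k * lam k + p.2.2) (q (p.2.1 j) p.1)|) * |ρ₁ - ρ₂| :=
        abs_proxDeriv_sub_proxDeriv_le hM1 hM2 hM3 hM2pos hM2bdd hM3bdd hρ₁ hρ₂ _ _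
    _ ≤ bound p * |ρ₁ - ρ₂| := by
        simp only [bound]
        gcongr
        exact abs_deriv_loss_le_add_mul_norm hM2 hM12 hM2pos hM2bdd hM12bdd hq lam j p

end Lipschitz

lemma exists_pos_forall_abs_sub_lt_of_abs_sub_le {ι : Type*} {f : ι → ℝ → ℝ} {s : Set ℝ}
    {C : ℝ} (hC : 0 ≤ C) (hf : ∀ i, ∀ b₁ ∈ s, ∀ b₂ ∈ s, |f i b₁ - f i b₂| ≤ C * |b₁ - b₂|)
    {ε : ℝ} (hε : 0 < ε) :
    ∃ δ : ℝ, 0 < δ ∧ ∀ i, ∀ b₁ ∈ s, ∀ b₂ ∈ s, |b₁ - b₂| < δ → |f i b₁ - f i b₂| < ε := by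
  refine ⟨ε / (C + 1), by positivity, fun i b₁ hb₁ b₂ hb₂ hb => ?_⟩
  calc |f i b₁ - f i b₂| ≤ C * |b₁ - b₂| := hf i b₁ hb₁ b₂ hb₂
    _ ≤ (C + 1) * |b₁ - b₂| := by gcongr; linarith
    _ < (C + 1) * (ε / (C + 1)) := by gcongr
    _ = ε := mul_div_cancel₀ _ (by positivity)

theorem h_family_equicontinuous_general (L : ℕ)
    (Γ : Fin L → Fin L → ℝ)
    (lam : Fin L → ℝ)            -- λ^{(ℓ)} (ℓ fixed)
    (κ : ℝ≥0)                    -- κ_{ℓ,ℓ}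
    (Ψ : ℕ → Fin L)              -- the signal configuration
    (bbar : ℝ) (hbbar : 0 < bbar)
    -- the weights π_i = π_i^{(ℓ)}: positive and uniformly bounded
    (π : ℕ → ℝ) (hπpos : ∀ i, 0 < π i)
    (πbar : ℝ) (hπbdd : ∀ i, π i ≤ πbar)
    -- q Lipschitz
    (q : ℝ → ℝ → ℝ) (Cq : ℝ≥0)
    (hq : LipschitzWith Cq fun x : ℝ × ℝ => q x.1 x.2)
    -- the limiting noise law, with finite second moment
    (Pe : Measure ℝ) (hPe : IsProbabilityMeasure Pe)
    (hPe2 : Integrable (fun x : ℝ => x ^ 2) Pe)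
    -- the loss: strictly convex, smooth, with bounded derivatives
    (M M1 M2 M3 M12 M2v : ℝ → ℝ → ℝ)
    (hM1 : ∀ u v, HasDerivAt (fun t => M t v) (M1 u v) u)
    (hM2 : ∀ u v, HasDerivAt (fun t => M1 t v) (M2 u v) u)
    (hM3 : ∀ u v, HasDerivAt (fun t => M2 t v) (M3 u v) u)
    (hM12 : ∀ u v, HasDerivAt (fun w => M1 u w) (M12 u v) v)
    (hM2v : ∀ u v, HasDerivAt (fun w => M2 u w) (M2v u v) v)
    (hM2pos : ∀ u v, 0 < M2 u v)
    (B2 B3 B12 B2v : ℝ)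
    (hM2bdd : ∀ u v, M2 u v ≤ B2)
    (hM3bdd : ∀ u v, |M3 u v| ≤ B3)
    (hM12bdd : ∀ u v, |M12 u v| ≤ B12)
    (hM2vbdd : ∀ u v, |M2v u v| ≤ B2v)
    -- the family {h_i}
    (h : ℕ → ℝ → ℝ)
    (hdef : ∀ i b, h i b =
      ∫ e, (∫ z, (∫ w,
          (1 + b * π i * M2
              (prox (b * π i) (fun t => M t (q (z (Ψ i)) e))
                ((∑ k, z k * lam k) + w))
              (q (z (Ψ i)) e))⁻¹
        ∂(gaussianReal 0 κ)) ∂(gaussianCov Γ)) ∂Pe) :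
    -- uniform Lipschitz bound on [0, b̄], hence equicontinuity
    (∃ Ceq : ℝ, ∀ i, ∀ b₁ ∈ Set.Icc (0 : ℝ) bbar, ∀ b₂ ∈ Set.Icc (0 : ℝ) bbar,
      |h i b₁ - h i b₂| ≤ Ceq * |b₁ - b₂|) ∧
    (∀ εq : ℝ, 0 < εq → ∃ δq : ℝ, 0 < δq ∧
      ∀ i, ∀ b₁ ∈ Set.Icc (0 : ℝ) bbar, ∀ b₂ ∈ Set.Icc (0 : ℝ) bbar,
        |b₁ - b₂| < δq → |h i b₁ - h i b₂| < εq) := by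
  have hπbar : 0 ≤ πbar := (hπpos 0).le.trans (hπbdd 0)
  obtain ⟨C, hC0, hC⟩ := exists_abs_integral_proxDeriv_sub_le (integrable_id_of_integrable_sq hPe2)
    (integrable_id_gaussianCov Γ) (IsGaussian.integrable_id (μ := gaussianReal 0 κ))
    hM1 hM2 hM3 hM12 hM2v hM2pos hM2bdd hM3bdd hM12bdd hM2vbdd hq lam
    (mul_nonneg hbbar.le hπbar)
  have hlip : ∀ i, ∀ b₁ ∈ Set.Icc (0 : ℝ) bbar, ∀ b₂ ∈ Set.Icc (0 : ℝ) bbar,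
      |h i b₁ - h i b₂| ≤ C * πbar * |b₁ - b₂| := by
    rintro i b₁ ⟨hb₁, -⟩ b₂ ⟨hb₂, hb₂bbar⟩
    have hπ := (hπpos i).le
    calc |h i b₁ - h i b₂| ≤ C * |b₁ * π i - b₂ * π i| := by
          rw [hdef, hdef]
          exact hC (Ψ i) _ _ (mul_nonneg hb₁ hπ) (mul_nonneg hb₂ hπ)
            (mul_le_mul hb₂bbar (hπbdd i) hπ hbbar.le)
      _ ≤ C * πbar * |b₁ - b₂| := by
          rw [← sub_mul, abs_mul, abs_of_pos (hπpos i), mul_assoc, mul_comm |b₁ - b₂|]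
          gcongr
          exact hπbdd i
  exact ⟨⟨_, hlip⟩, fun ε hε =>
    exists_pos_forall_abs_sub_lt_of_abs_sub_le (by positivity) hlip hε⟩

/-- Lemma: equicontinuity of the family h_i in b. Fix
ℓ ∈ [L] and b̄ > 0, and set
  h_i(b) := E[(1 + b·π_i M′′(prox_{bπ_iM(·,ȳ_i)}(Z_i·λ^{(ℓ)} + w_i^{(ℓ)}),
                ȳ_i))⁻¹],
with ȳ_i := q(Z_i, Ψ_i, ε̄), ε̄ ~ P_ε̄ independent of Z_i ~ N(0,Γ) and
w_i ~ N(0,κ_{ℓ,ℓ}). Then {h_i}_{i∈ℕ} is equicontinuous on [0, b̄]; in fact it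
is uniformly Lipschitz there, with a constant independent of i. -/
theorem h_family_equicontinuous (L : ℕ)
    (Γ : Fin L → Fin L → ℝ) (hΓ : (Matrix.of Γ).PosSemidef)
    (lam : Fin L → ℝ)            -- λ^{(ℓ)} (ℓ fixed)
    (κ : ℝ≥0)                    -- κ_{ℓ,ℓ}
    (Ψ : ℕ → Fin L)              -- the signal configuration
    (bbar : ℝ) (hbbar : 0 < bbar)
    -- the weights π_i = π_i^{(ℓ)}: positive and uniformly bounded
    (π : ℕ → ℝ) (hπpos : ∀ i, 0 < π i)
    (πbar : ℝ) (hπbdd : ∀ i, π i ≤ πbar)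
    -- q Lipschitz
    (q : ℝ → ℝ → ℝ) (Cq : ℝ≥0)
    (hq : LipschitzWith Cq fun x : ℝ × ℝ => q x.1 x.2)
    -- the limiting noise law, with finite second moment
    (Pe : Measure ℝ) (hPe : IsProbabilityMeasure Pe)
    (hPe2 : Integrable (fun x : ℝ => x ^ 2) Pe)
    -- the loss: strictly convex, smooth, with bounded derivatives
    (M M1 M2 M3 M12 M2v : ℝ → ℝ → ℝ)
    (hMsc : ∀ v, StrictConvexOn ℝ Set.univ fun t => M t v)
    (hM1 : ∀ u v, HasDerivAt (fun t => M t v) (M1 u v) u)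
    (hM2 : ∀ u v, HasDerivAt (fun t => M1 t v) (M2 u v) u)
    (hM3 : ∀ u v, HasDerivAt (fun t => M2 t v) (M3 u v) u)
    (hM12 : ∀ u v, HasDerivAt (fun w => M1 u w) (M12 u v) v)
    (hM2v : ∀ u v, HasDerivAt (fun w => M2 u w) (M2v u v) v)
    (hM2pos : ∀ u v, 0 < M2 u v)
    (B2 B3 B12 B2v : ℝ)
    (hM2bdd : ∀ u v, M2 u v ≤ B2)
    (hM3bdd : ∀ u v, |M3 u v| ≤ B3)
    (hM12bdd : ∀ u v, |M12 u v| ≤ B12)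
    (hM2vbdd : ∀ u v, |M2v u v| ≤ B2v)
    -- the family {h_i}
    (h : ℕ → ℝ → ℝ)
    (hdef : ∀ i b, h i b =
      ∫ e, (∫ z, (∫ w,
          (1 + b * π i * M2
              (prox (b * π i) (fun t => M t (q (z (Ψ i)) e))
                ((∑ k, z k * lam k) + w))
              (q (z (Ψ i)) e))⁻¹
        ∂(gaussianReal 0 κ)) ∂(gaussianCov Γ)) ∂Pe) :
    -- uniform Lipschitz bound on [0, b̄], hence equicontinuity
    (∃ Ceq : ℝ, ∀ i, ∀ b₁ ∈ Set.Icc (0 : ℝ) bbar, ∀ b₂ ∈ Set.Icc (0 : ℝ) bbar,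
      |h i b₁ - h i b₂| ≤ Ceq * |b₁ - b₂|) ∧
    (∀ εq : ℝ, 0 < εq → ∃ δq : ℝ, 0 < δq ∧
      ∀ i, ∀ b₁ ∈ Set.Icc (0 : ℝ) bbar, ∀ b₂ ∈ Set.Icc (0 : ℝ) bbar,
        |b₁ - b₂| < δq → |h i b₁ - h i b₂| < εq) :=
  h_family_equicontinuous_general L Γ lam κ Ψ bbar hbbar π hπpos πbar hπbdd q Cq hq Pe hPe hPe2 M M1
    M2 M3 M12 M2v hM1 hM2 hM3 hM12 hM2v hM2pos B2 B3 B12 B2v hM2bdd hM3bdd hM12bdd hM2vbdd h hdef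

end
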